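/- Let N ≥ 3 be prime and let k, k′ be two distinct elements of the index set I. Then V_k and V_{k′} are non-isomorphic representations of ℤ/N × ℤ/N: there is no ℝ-linear bijection T : V_k → V_{k′} satisfying T((r,s)·x) = (r,s)·T(x) for all (r,s) ∈ ℤ/N × ℤ/N and all x ∈ V_k. -/

import Mathlib

/-- The generating vector of `V_k`: `x_{α,β} = Re(z · exp(2πi(αk₁+βk₂)/N))`. -/
noncomputable def vkFun (N : ℕ) (k : ℤ × ℤ) (z : ℂ) : ZMod N × ZMod N → ℝ :=
  fun p => (z * Complex.exp (2 * Real.pi * Complex.I *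
    (((p.1.val : ℂ) * (k.1 : ℂ) + (p.2.val : ℂ) * (k.2 : ℂ)) / (N : ℂ)))).re

/-- The subspace `V_k ⊆ ℝ^{N×N}`, as a set. -/
def VkSet (N : ℕ) (k : ℤ × ℤ) : Set (ZMod N × ZMod N → ℝ) :=
  {x | ∃ z : ℂ, x = vkFun N k z}

/-- The action of `ℤ/N × ℤ/N` on `ℝ^{N×N}` by index translation:
`((r,s)·x)_{α,β} = x_{α+r,β+s}`. -/
def act (N : ℕ) (g : ZMod N × ZMod N) (x : ZMod N × ZMod N → ℝ) :
    ZMod N × ZMod N → ℝ :=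
  fun p => x (p.1 + g.1, p.2 + g.2)

/-- The index set `I`: `(0,0)`; `(0,k₂)` for `1 ≤ k₂ ≤ (N-1)/2`; `(k₁,0)` for
`1 ≤ k₁ ≤ (N-1)/2`; `(k₁,k₁)` for `1 ≤ k₁ ≤ (N-1)/2`; and `(k₁,k₂)` for
`1 ≤ k₂ < k₁ ≤ N-1`. -/
def idxI (N : ℕ) (k : ℤ × ℤ) : Prop :=
  k = (0, 0) ∨
  (k.1 = 0 ∧ 1 ≤ k.2 ∧ k.2 ≤ ((N : ℤ) - 1) / 2) ∨
  (k.2 = 0 ∧ 1 ≤ k.1 ∧ k.1 ≤ ((N : ℤ) - 1) / 2) ∨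
  (k.1 = k.2 ∧ 1 ≤ k.1 ∧ k.1 ≤ ((N : ℤ) - 1) / 2) ∨
  (1 ≤ k.2 ∧ k.2 < k.1 ∧ k.1 ≤ (N : ℤ) - 1)

/-!
Identify `V_k` with `ℂ` via `z ↦ vkFun N k z`. Translation by `g` becomes multiplication by the
character value `χ_k(g) = e^{2πi⟨g,k⟩/N}`, so `x ↦ g·x + (-g)·x` acts on `V_k` as the scalar
`2 Re χ_k(g)`. An equivariant bijection `V_k → V_{k'}` therefore forces
`Re χ_k = Re χ_{k'}`, i.e. `⟨g,k⟩ = ±⟨g,k'⟩` in `ℤ/N` for every `g`. Testing `g = (1,0), (0,1), (1,1)`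
gives `k ≡ ±k' (mod N)` with one sign, and `I` contains at most one member of each class `±k`.
-/

open Complex

lemma Circle.eq_or_eq_inv_of_re_eq {u v : Circle} (h : (u : ℂ).re = (v : ℂ).re) :
    u = v ∨ u = v⁻¹ := by
  have hu := Circle.normSq_coe u
  have hv := Circle.normSq_coe v
  rw [normSq_apply] at hu hv
  have him : (u : ℂ).im = (v : ℂ).im ∨ (u : ℂ).im = -(v : ℂ).im := by
    rw [h] at hu
    exact sq_eq_sq_iff_eq_or_eq_neg.mp (by linear_combination hu - hv)
  rcases him with him | him
  · exact .inl (Circle.ext (Complex.ext h him))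
  · exact .inr (Circle.ext (by rw [Circle.coe_inv_eq_conj]; exact Complex.ext h him))

lemma ZMod.eq_or_eq_neg_of_re_toCircle_eq {N : ℕ} [NeZero N] {a b : ZMod N}
    (h : (toCircle a : ℂ).re = (toCircle b : ℂ).re) : a = b ∨ a = -b := by
  rcases Circle.eq_or_eq_inv_of_re_eq h with h | h
  · exact .inl (injective_toCircle h)
  · exact .inr (injective_toCircle (by rw [h, AddChar.map_neg_eq_inv]))

lemma eq_or_eq_neg_of_forall_linear_form {R : Type*} [Ring R] {a₁ a₂ b₁ b₂ : R}
    (h : ∀ x y : R, x * a₁ + y * a₂ = x * b₁ + y * b₂ ∨ x * a₁ + y * a₂ = -(x * b₁ + y * b₂)) :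
    (a₁ = b₁ ∧ a₂ = b₂) ∨ (a₁ = -b₁ ∧ a₂ = -b₂) := by
  have h₁ := h 1 0
  have h₂ := h 0 1
  have h₃ := h 1 1
  simp only [one_mul, zero_mul, add_zero, zero_add] at h₁ h₂ h₃
  rcases h₁ with h₁ | h₁ <;> rcases h₂ with h₂ | h₂
  · exact .inl ⟨h₁, h₂⟩
  · rcases h₃ with h₃ | h₃
    · left; refine ⟨h₁, ?_⟩; rw [h₁] at h₃; exact add_left_cancel h₃
    · right; refine ⟨?_, h₂⟩; rw [h₂, neg_add] at h₃; exact add_right_cancel h₃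
  · rcases h₃ with h₃ | h₃
    · left; refine ⟨?_, h₂⟩; rw [h₂] at h₃; exact add_right_cancel h₃
    · right; refine ⟨h₁, ?_⟩; rw [h₁, neg_add] at h₃; exact add_left_cancel h₃
  · exact .inr ⟨h₁, h₂⟩

def pairing (N : ℕ) (k : ℤ × ℤ) (g : ZMod N × ZMod N) : ZMod N := g.1 * k.1 + g.2 * k.2

lemma pairing_add (N : ℕ) (k : ℤ × ℤ) (g h : ZMod N × ZMod N) :
    pairing N k (g + h) = pairing N k g + pairing N k h := by
  simp only [pairing, Prod.fst_add, Prod.snd_add]; ring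

lemma pairing_neg (N : ℕ) (k : ℤ × ℤ) (g : ZMod N × ZMod N) :
    pairing N k (-g) = -pairing N k g := by
  simp only [pairing, Prod.fst_neg, Prod.snd_neg]; ring

lemma vkFun_apply_eq_re_toCircle (N : ℕ) [NeZero N] (k : ℤ × ℤ) (z : ℂ) (p : ZMod N × ZMod N) :
    vkFun N k z p = (z * ZMod.toCircle (pairing N k p)).re := by
  have hcast : pairing N k p = (((p.1.val * k.1 + p.2.val * k.2 : ℤ)) : ZMod N) := by
    push_cast; simp only [ZMod.natCast_zmod_val, pairing]
  rw [hcast, ZMod.toCircle_intCast, vkFun]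
  push_cast
  ring_nf

lemma act_vkFun (N : ℕ) [NeZero N] (k : ℤ × ℤ) (g : ZMod N × ZMod N) (z : ℂ) :
    act N g (vkFun N k z) = vkFun N k (z * ZMod.toCircle (pairing N k g)) := by
  funext p
  simp only [act, vkFun_apply_eq_re_toCircle]
  rw [show (p.1 + g.1, p.2 + g.2) = p + g from rfl, pairing_add, AddChar.map_add_eq_mul,
    Circle.coe_mul]
  ring_nf

lemma vkFun_add (N : ℕ) (k : ℤ × ℤ) (z w : ℂ) :
    vkFun N k (z + w) = vkFun N k z + vkFun N k w := by
  funext p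
  simp [vkFun, add_mul]

lemma vkFun_ofReal_mul (N : ℕ) (k : ℤ × ℤ) (c : ℝ) (z : ℂ) :
    vkFun N k (c * z) = c • vkFun N k z := by
  funext p
  simp [vkFun, mul_assoc]

lemma act_add_act_neg_of_mem_VkSet (N : ℕ) [NeZero N] (k : ℤ × ℤ) (g : ZMod N × ZMod N)
    {x : ZMod N × ZMod N → ℝ} (hx : x ∈ VkSet N k) :
    act N g x + act N (-g) x = (2 * (ZMod.toCircle (pairing N k g) : ℂ).re) • x := by
  obtain ⟨z, rfl⟩ := hx
  rw [act_vkFun, act_vkFun, ← vkFun_add, ← vkFun_ofReal_mul, pairing_neg,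
    AddChar.map_neg_eq_inv, Circle.coe_inv_eq_conj, ← mul_add, add_conj, mul_comm]

lemma vkFun_one_ne_zero (N : ℕ) [NeZero N] (k : ℤ × ℤ) : vkFun N k 1 ≠ 0 := by
  intro h
  have h0 := congrFun h 0
  simp [vkFun_apply_eq_re_toCircle, pairing] at h0

lemma re_toCircle_pairing_eq_of_equivariant (N : ℕ) [NeZero N] {k k' : ℤ × ℤ}
    (T : (ZMod N × ZMod N → ℝ) →ₗ[ℝ] (ZMod N × ZMod N → ℝ))
    (hT : Set.BijOn T (VkSet N k) (VkSet N k'))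
    (hequiv : ∀ g : ZMod N × ZMod N, ∀ x ∈ VkSet N k, T (act N g x) = act N g (T x))
    (g : ZMod N × ZMod N) :
    (ZMod.toCircle (pairing N k g) : ℂ).re = (ZMod.toCircle (pairing N k' g) : ℂ).re := by
  set x := vkFun N k 1
  have hx : x ∈ VkSet N k := ⟨1, rfl⟩
  have hTx : T x ≠ 0 := fun h0 => vkFun_one_ne_zero N k <|
    hT.injOn hx ⟨0, by funext p; simp [vkFun]⟩ (by rw [h0, map_zero])
  have hsum := congrArg T (act_add_act_neg_of_mem_VkSet N k g hx)
  rw [map_add, hequiv g x hx, hequiv (-g) x hx, map_smul,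
    act_add_act_neg_of_mem_VkSet N k' g (hT.mapsTo hx)] at hsum
  have := smul_left_injective ℝ hTx hsum
  linarith

lemma idxI_bounds {N : ℕ} {k : ℤ × ℤ} (hN : 0 < N) (hk : idxI N k) :
    0 ≤ k.1 ∧ k.1 < N ∧ 0 ≤ k.2 ∧ k.2 < N := by
  rcases hk with rfl | h | h | h | h <;> omega

lemma Int.eq_of_intCast_eq {N : ℕ} {a b : ℤ} (ha : 0 ≤ a) (ha' : a < N) (hb : 0 ≤ b)
    (hb' : b < N) (h : (a : ZMod N) = b) : a = b := by
  rw [ZMod.intCast_eq_intCast_iff', Int.emod_eq_of_lt ha ha', Int.emod_eq_of_lt hb hb'] at h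
  exact h

lemma Int.add_eq_zero_or_eq_of_intCast_eq_neg {N : ℕ} {a b : ℤ} (ha : 0 ≤ a) (ha' : a < N)
    (hb : 0 ≤ b) (hb' : b < N) (h : (a : ZMod N) = -b) : a + b = 0 ∨ a + b = N := by
  rw [eq_neg_iff_add_eq_zero, ← Int.cast_add, ZMod.intCast_zmod_eq_zero_iff_dvd] at h
  obtain ⟨c, hc⟩ := h
  have : c < 2 := by nlinarith
  have : 0 ≤ c := by nlinarith
  interval_cases c <;> simp [hc]

lemma idxI_eq_of_intCast_eq_or_eq_neg {N : ℕ} (hN : 0 < N) {k k' : ℤ × ℤ}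
    (hk : idxI N k) (hk' : idxI N k')
    (h : ((k.1 : ZMod N) = k'.1 ∧ (k.2 : ZMod N) = k'.2) ∨
      ((k.1 : ZMod N) = -k'.1 ∧ (k.2 : ZMod N) = -k'.2)) : k = k' := by
  obtain ⟨h₁, h₁', h₂, h₂'⟩ := idxI_bounds hN hk
  obtain ⟨h₃, h₃', h₄, h₄'⟩ := idxI_bounds hN hk'
  rcases h with ⟨e₁, e₂⟩ | ⟨e₁, e₂⟩
  · exact Prod.ext (Int.eq_of_intCast_eq h₁ h₁' h₃ h₃' e₁)
      (Int.eq_of_intCast_eq h₂ h₂' h₄ h₄' e₂)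
  · have s₁ := Int.add_eq_zero_or_eq_of_intCast_eq_neg h₁ h₁' h₃ h₃' e₁
    have s₂ := Int.add_eq_zero_or_eq_of_intCast_eq_neg h₂ h₂' h₄ h₄' e₂
    obtain ⟨k₁, k₂⟩ := k
    obtain ⟨k₁', k₂'⟩ := k'
    simp only [idxI, Prod.mk.injEq] at hk hk' ⊢
    omega

theorem stmt2_general (N : ℕ) (h3 : 3 ≤ N) (k k' : ℤ × ℤ)
    (hk : idxI N k) (hk' : idxI N k') (hne : k ≠ k') :
    ¬ ∃ T : (ZMod N × ZMod N → ℝ) →ₗ[ℝ] (ZMod N × ZMod N → ℝ),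
      Set.BijOn T (VkSet N k) (VkSet N k') ∧
      ∀ g : ZMod N × ZMod N, ∀ x ∈ VkSet N k, T (act N g x) = act N g (T x) := by
  have : NeZero N := ⟨by omega⟩
  rintro ⟨T, hT, hequiv⟩
  have hpairing : ∀ g, pairing N k g = pairing N k' g ∨ pairing N k g = -pairing N k' g :=
    fun g => ZMod.eq_or_eq_neg_of_re_toCircle_eq
      (re_toCircle_pairing_eq_of_equivariant N T hT hequiv g)
  exact hne <| idxI_eq_of_intCast_eq_or_eq_neg (by omega) hk hk' <|
    eq_or_eq_neg_of_forall_linear_form fun x y => hpairing (x, y)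

/-- For distinct `k, k' ∈ I`, the representations `V_k` and `V_{k'}` of
`ℤ/N × ℤ/N` are non-isomorphic: there is no ℝ-linear map restricting to an
equivariant bijection from `V_k` onto `V_{k'}`. -/
theorem stmt2 (N : ℕ) (hN : N.Prime) (h3 : 3 ≤ N) (k k' : ℤ × ℤ)
    (hk : idxI N k) (hk' : idxI N k') (hne : k ≠ k') :
    ¬ ∃ T : (ZMod N × ZMod N → ℝ) →ₗ[ℝ] (ZMod N × ZMod N → ℝ),
      Set.BijOn T (VkSet N k) (VkSet N k') ∧
      ∀ g : ZMod N × ZMod N, ∀ x ∈ VkSet N k, T (act N g x) = act N g (T x) :=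
  stmt2_general N h3 k k' hk hk' hne
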